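/- Let X, U be discrete random variables with finite supports on a common probability space, and let 𝒰 be the support of U. Then the random vector T* := (p_{U|X}(u | X))_{u∈𝒰} (the posterior distribution of U given X, as a function of X) is a minimal sufficient statistic of X for U: T* is a sufficient statistic of X for U, and every sufficient statistic T of X for U satisfies T ≥ι T*. Consequently, any two minimal sufficient statistics of X for U are informationally equivalent. -/

import Mathlib

namespace Paper

/-- The probability of an event under a probability mass function. -/
noncomputable def pr {Ω : Type} (μ : PMF Ω) (E : Set Ω) : ENNReal :=
  μ.toOuterMeasure E

/-- Conditional independence `X ⊥⊥ Y | Z`: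
`p(x,y,z) p(z) = p(x,z) p(y,z)` for all `x, y, z`. -/
def CondIndep {Ω α β γ : Type} (μ : PMF Ω) (X : Ω → α) (Y : Ω → β) (Z : Ω → γ) : Prop :=
  ∀ (x : α) (y : β) (z : γ),
    pr μ {ω | X ω = x ∧ Y ω = y ∧ Z ω = z} * pr μ {ω | Z ω = z}
      = pr μ {ω | X ω = x ∧ Z ω = z} * pr μ {ω | Y ω = y ∧ Z ω = z}

/-- Unconditional independence `X ⊥⊥ Y`. -/
def Indep {Ω α β : Type} (μ : PMF Ω) (X : Ω → α) (Y : Ω → β) : Prop :=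
  ∀ (x : α) (y : β),
    pr μ {ω | X ω = x ∧ Y ω = y} = pr μ {ω | X ω = x} * pr μ {ω | Y ω = y}

/-- `X ≥ι Y`: `X` functionally determines `Y` (with probability one). -/
def FunDep {Ω α β : Type} (μ : PMF Ω) (X : Ω → α) (Y : Ω → β) : Prop :=
  ∃ f : α → β, ∀ ω ∈ μ.support, Y ω = f (X ω)

/-- `X =ι Y`: informational equivalence. -/
def InfoEq {Ω α β : Type} (μ : PMF Ω) (X : Ω → α) (Y : Ω → β) : Prop :=
  FunDep μ X Y ∧ FunDep μ Y X

/-- The random variable `X` has finite support. -/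
def FinSupp {Ω α : Type} (μ : PMF Ω) (X : Ω → α) : Prop :=
  (X '' μ.support).Finite

/-- The random variable `X` has support of cardinality at most `ℓ`. -/
def CardLE {Ω α : Type} (μ : PMF Ω) (X : Ω → α) (ℓ : ℕ) : Prop :=
  ∃ s : Finset α, s.card ≤ ℓ ∧ ∀ ω ∈ μ.support, X ω ∈ s

/-- `X` is uniformly distributed with support of cardinality `ℓ`. -/
def UniformCard {Ω α : Type} (μ : PMF Ω) (X : Ω → α) (ℓ : ℕ) : Prop :=
  ∃ S : Finset α, S.card = ℓ ∧ (∀ x ∈ S, pr μ {ω | X ω = x} = (ℓ : ENNReal)⁻¹) ∧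
    ∀ x, x ∉ S → pr μ {ω | X ω = x} = 0

/-- The probability mass function of the random variable `X`. -/
noncomputable def distOf {Ω α : Type} (μ : PMF Ω) (X : Ω → α) : α → ENNReal :=
  fun x => pr μ {ω | X ω = x}

/-- `p ⪰ q` : `p` majorizes `q`, i.e. for every `k`, the sum of the `k` largest values
of `p` is at least the sum of the `k` largest values of `q`. -/
def Majorizes (p q : ℕ → ENNReal) : Prop :=
  ∀ s : Finset ℕ, ∃ t : Finset ℕ, t.card ≤ s.card ∧ ∑ x ∈ s, q x ≤ ∑ x ∈ t, p x

/-- `T` is a sufficient statistic of `X` for `U`: `X ≥ι T` and `U ⊥⊥ X | T`. -/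
def SuffStat {Ω α β γ : Type} (μ : PMF Ω) (X : Ω → α) (U : Ω → β) (T : Ω → γ) : Prop :=
  FunDep μ X T ∧ CondIndep μ U X T

/-- `T` is a minimal sufficient statistic of `X` for `U`. -/
def MinSuffStat {Ω α β γ : Type} (μ : PMF Ω) (X : Ω → α) (U : Ω → β) (T : Ω → γ) : Prop :=
  SuffStat μ X U T ∧
    ∀ (δ : Type) (T' : Ω → δ), SuffStat μ X U T' → FunDep μ T' T

/-- Mutual independence of the subfamily `(V i)_{i ∈ s}`: each `V i` (for `i ∈ s`) is
independent of the joint variable of the others. -/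
def MutIndepOn {Ω ι : Type} {β : ι → Type} (μ : PMF Ω) (V : ∀ i, Ω → β i)
    (s : Finset ι) : Prop :=
  ∀ i ∈ s, Indep μ (V i) (fun ω => fun j : {j // j ∈ s ∧ j ≠ i} => V j.1 ω)

/-- Mutual independence of the whole family `(V i)_i`. -/
def MutIndep {Ω ι : Type} {β : ι → Type} (μ : PMF Ω) (V : ∀ i, Ω → β i) : Prop :=
  ∀ i, Indep μ (V i) (fun ω => fun j : {j // j ≠ i} => V j.1 ω)

/-- Mutual independence of `(V i)_{i ∈ C}` for a list `C` of indices. -/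
def MutIndepL {Ω : Type} (μ : PMF Ω) (V : ℕ → Ω → ℕ) (C : List ℕ) : Prop :=
  ∀ i ∈ C, Indep μ (V i) (fun ω => fun j : {j // j ∈ C ∧ j ≠ i} => V j.1 ω)

/-- The joint random variable `(X a)_{a ∈ A}` for a list `A` of indices. -/
def jointOn {Ω : Type} (X : ℕ → Ω → ℕ) (A : List ℕ) : Ω → ({a : ℕ // a ∈ A} → ℕ) :=
  fun ω a => X a.1 ω

/-- The joint random variable `(T i)_{i ∈ S}` for a finset `S` of indices. -/
def jointFin {Ω ι : Type} {β : ι → Type} (T : ∀ i, Ω → β i) (S : Finset ι) :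
    Ω → ((i : {i // i ∈ S}) → β i.1) :=
  fun ω i => T i.1 ω

/-- The set of parents (in-neighbours) of `w` in the directed graph with edge relation `E`. -/
def parentSet {ν : Type} (E : ν → ν → Prop) (w : ν) : Set ν := {v | E v w}

/-- The set of nodes that are neither descendants nor parents of `w`. -/
def nonDescSet {ν : Type} (E : ν → ν → Prop) (w : ν) : Set ν :=
  {v | ¬ Relation.ReflTransGen E w v ∧ ¬ E v w}

/-- The collection of random variables `(X v)_v` satisfies the Bayesian network structure
with edge relation `E`: each variable is conditionally independent of its
non-descendant non-parent variables given its parent variables. -/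
def SatisfiesBN {Ω ν : Type} {β : ν → Type} (μ : PMF Ω) (X : ∀ v, Ω → β v)
    (E : ν → ν → Prop) : Prop :=
  ∀ w : ν, CondIndep μ (X w)
    (fun ω => fun v : nonDescSet E w => X v.1 ω)
    (fun ω => fun v : parentSet E w => X v.1 ω)

/-- `E` is (the edge list of) a directed acyclic graph on the nodes `{0, …, n-1}`. -/
def IsDAG (n : ℕ) (E : List (ℕ × ℕ)) : Prop :=
  (∀ e ∈ E, e.1 < n ∧ e.2 < n) ∧
    ∀ i : ℕ, ¬ Relation.TransGen (fun a c => (a, c) ∈ E) i i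

/-- The edge relation on `Fin n` determined by an edge list. -/
def edgeRelOn (n : ℕ) (E : List (ℕ × ℕ)) : Fin n → Fin n → Prop :=
  fun i j => ((i : ℕ), (j : ℕ)) ∈ E

/-- `(X_0, …, X_{n-1})` satisfies the Bayesian network given by the edge list `E`. -/
def SatisfiesBNn {Ω : Type} (μ : PMF Ω) (n : ℕ) (X : ℕ → Ω → ℕ)
    (E : List (ℕ × ℕ)) : Prop :=
  SatisfiesBN μ (fun i : Fin n => X (i : ℕ)) (edgeRelOn n E)

/-- `(A, C, B) ∈ I(G_1, …, G_m)`: every collection of finitely supported discrete random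
variables satisfying all the network structures in `Gs` satisfies `X_A ⊥⊥ X_B | X_C`. -/
def ImpliedCI (n : ℕ) (Gs : List (List (ℕ × ℕ))) (A C B : List ℕ) : Prop :=
  ∀ (Ω : Type) (μ : PMF Ω) (X : ℕ → Ω → ℕ),
    (∀ i, i < n → FinSupp μ (X i)) →
    (∀ G ∈ Gs, SatisfiesBNn μ n X G) →
    CondIndep μ (jointOn X A) (jointOn X B) (jointOn X C)

/-- Two lists are disjoint as sets. -/
def DisjointL (A B : List ℕ) : Prop := ∀ a ∈ A, a ∉ B

end Paper
namespace Paper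

/-!
Sufficiency: if two values `x, x'` of `X` have the same posterior, then
`P(U = u, X = x) P(X = x') = P(U = u, X = x') P(X = x)`; summing over `x'` in a level set
of the posterior gives the conditional independence `U ⊥⊥ X | T*`, with no division involved.
Minimality: if `T` is sufficient, then `X ≥ι T` and `U ⊥⊥ X | T` give
`P(U = u, X = x) P(T = t) = P(U = u, T = t) P(X = x)` whenever `x` is possible and `T = t`
on `{X = x}`, so the posterior of `U` given `X` equals its posterior given `T`, a function of `T`.
-/

section Probability

variable {Ω : Type} (μ : PMF Ω)

lemma pr_congr {S S' : Set Ω} (h : ∀ ω ∈ μ.support, (ω ∈ S ↔ ω ∈ S')) :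
    pr μ S = pr μ S' :=
  μ.toOuterMeasure_apply_eq_of_inter_support_eq <| Set.ext fun ω => and_congr_left (h ω)

lemma pr_ne_top (S : Set Ω) : pr μ S ≠ ⊤ := by
  rw [pr, PMF.toOuterMeasure_apply]
  exact μ.tsum_coe_indicator_ne_top S

lemma pr_ne_zero_of_mem {S : Set Ω} {ω : Ω} (hω : ω ∈ μ.support) (hS : ω ∈ S) :
    pr μ S ≠ 0 := by
  rw [pr, Ne, PMF.toOuterMeasure_apply_eq_zero_iff]
  exact Set.not_disjoint_iff.2 ⟨ω, hω, hS⟩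

lemma pr_eq_zero_of_subset {S S' : Set Ω} (h : S ⊆ S') (hS' : pr μ S' = 0) : pr μ S = 0 :=
  le_antisymm (hS' ▸ μ.toOuterMeasure.mono h) bot_le

lemma pr_and_comp_eq_tsum {α γ : Type} (P : Ω → Prop) (X : Ω → α) (f : α → γ) (z : γ) :
    pr μ {ω | P ω ∧ f (X ω) = z} =
      ∑' x, (f ⁻¹' {z}).indicator (fun x => pr μ {ω | P ω ∧ X ω = x}) x := by
  simp only [pr, PMF.toOuterMeasure_apply]
  calc ∑' ω, {ω | P ω ∧ f (X ω) = z}.indicator μ ω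
      = ∑' ω, ∑' x, (f ⁻¹' {z}).indicator (fun x => {ω | P ω ∧ X ω = x}.indicator μ ω) x := by
        refine tsum_congr fun ω => ?_
        rw [tsum_eq_single (X ω)]
        · by_cases hP : P ω <;> by_cases hz : f (X ω) = z <;> simp [hP, hz]
        · intro x hx
          simp [Ne.symm hx]
    _ = _ := by
        rw [ENNReal.tsum_comm]
        refine tsum_congr fun x => ?_
        by_cases hx : f x = z <;> simp [hx]

end Probability

section Posterior

variable {Ω α β : Type} (μ : PMF Ω) (U : Ω → β) (X : Ω → α)

noncomputable def posterior (x : α) (u : β) : ENNReal :=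
  pr μ {ω | U ω = u ∧ X ω = x} / pr μ {ω | X ω = x}

/-- Where `P(X = x) = 0` the posterior is the junk value `0 / 0 = 0`, but then both sides vanish. -/
lemma pr_mul_pr_eq_of_posterior_eq {x x' : α} {u : β}
    (h : posterior μ U X x u = posterior μ U X x' u) :
    pr μ {ω | U ω = u ∧ X ω = x} * pr μ {ω | X ω = x'} =
      pr μ {ω | U ω = u ∧ X ω = x'} * pr μ {ω | X ω = x} := by
  by_cases hx : pr μ {ω | X ω = x} = 0
  · rw [pr_eq_zero_of_subset μ (fun ω hω => hω.2) hx, hx, zero_mul, mul_zero]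
  by_cases hx' : pr μ {ω | X ω = x'} = 0
  · rw [pr_eq_zero_of_subset μ (S := {ω | U ω = u ∧ X ω = x'}) (fun ω hω => hω.2) hx', hx',
      zero_mul, mul_zero]
  rw [mul_comm (pr μ {ω | U ω = u ∧ X ω = x}), mul_comm (pr μ {ω | U ω = u ∧ X ω = x'})]
  exact (ENNReal.div_eq_div_iff hx' (pr_ne_top μ _) hx (pr_ne_top μ _)).1 h

lemma condIndep_comp_of_pr_mul_pr_eq {γ : Type} (f : α → γ)
    (hf : ∀ x x', f x = f x' → ∀ u, pr μ {ω | U ω = u ∧ X ω = x} * pr μ {ω | X ω = x'} =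
      pr μ {ω | U ω = u ∧ X ω = x'} * pr μ {ω | X ω = x}) :
    CondIndep μ U X (fun ω => f (X ω)) := by
  intro u x z
  by_cases hz : f x = z
  · have hjoint : {ω | U ω = u ∧ X ω = x ∧ f (X ω) = z} = {ω | U ω = u ∧ X ω = x} :=
      Set.ext fun ω => and_congr_right fun _ => and_iff_left_of_imp fun h => h ▸ hz
    have hmarg : {ω | X ω = x ∧ f (X ω) = z} = {ω | X ω = x} :=
      Set.ext fun ω => and_iff_left_of_imp fun h => h ▸ hz
    have hfiber : pr μ {ω | f (X ω) = z} =
        ∑' x', (f ⁻¹' {z}).indicator (fun x' => pr μ {ω | X ω = x'}) x' := by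
      simpa using pr_and_comp_eq_tsum μ (fun _ => True) X f z
    change _ * pr μ {ω | f (X ω) = z} = pr μ {ω | U ω = u ∧ f (X ω) = z} * _
    rw [hjoint, hmarg, hfiber, pr_and_comp_eq_tsum μ (U · = u) X f z, ← ENNReal.tsum_mul_left,
      ← ENNReal.tsum_mul_right]
    refine tsum_congr fun x' => ?_
    by_cases hx' : f x' = z
    · simp only [Set.indicator_of_mem (show x' ∈ f ⁻¹' {z} from hx')]
      exact hf x x' (hz.trans hx'.symm) u
    · simp [Set.indicator_of_notMem (show x' ∉ f ⁻¹' {z} from hx')]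
  · have hjoint : {ω | U ω = u ∧ X ω = x ∧ f (X ω) = z} = ∅ :=
      Set.eq_empty_of_forall_notMem fun ω h => hz (h.2.1 ▸ h.2.2)
    have hmarg : {ω | X ω = x ∧ f (X ω) = z} = ∅ :=
      Set.eq_empty_of_forall_notMem fun ω h => hz (h.1 ▸ h.2)
    change pr μ {ω | U ω = u ∧ X ω = x ∧ f (X ω) = z} * _ = _ * pr μ {ω | X ω = x ∧ f (X ω) = z}
    simp [hjoint, hmarg, pr]

noncomputable def posteriorStat : Ω → {u : β // pr μ {ω | U ω = u} ≠ 0} → ENNReal :=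
  fun ω u => posterior μ U X (X ω) u.1

lemma condIndep_posteriorStat : CondIndep μ U X (posteriorStat μ U X) := by
  refine condIndep_comp_of_pr_mul_pr_eq μ U X
    (fun x (u : {u : β // pr μ {ω | U ω = u} ≠ 0}) => posterior μ U X x u.1) fun x x' h u => ?_
  by_cases hu : pr μ {ω | U ω = u} = 0
  · rw [pr_eq_zero_of_subset μ (S := {ω | U ω = u ∧ X ω = x}) (fun ω hω => hω.1) hu,
      pr_eq_zero_of_subset μ (S := {ω | U ω = u ∧ X ω = x'}) (fun ω hω => hω.1) hu,
      zero_mul, zero_mul]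
  · exact pr_mul_pr_eq_of_posterior_eq μ U X (congrFun h ⟨u, hu⟩)

lemma suffStat_posteriorStat : SuffStat μ X U (posteriorStat μ U X) :=
  ⟨⟨fun x u => posterior μ U X x u.1, fun _ _ => rfl⟩, condIndep_posteriorStat μ U X⟩

lemma posterior_eq_of_suffStat {γ : Type} {T : Ω → γ} (hT : SuffStat μ X U T) {ω : Ω}
    (hω : ω ∈ μ.support) (u : β) :
    posterior μ U X (X ω) u = posterior μ U T (T ω) u := by
  obtain ⟨⟨g, hg⟩, hci⟩ := hT
  have hXT : ∀ ω' ∈ μ.support, X ω' = X ω → T ω' = T ω := fun ω' hω' h => by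
    rw [hg ω' hω', hg ω hω, h]
  have hjoint : pr μ {ω' | U ω' = u ∧ X ω' = X ω ∧ T ω' = T ω} =
      pr μ {ω' | U ω' = u ∧ X ω' = X ω} :=
    pr_congr μ fun ω' hω' => and_congr_right fun _ => and_iff_left_of_imp (hXT ω' hω')
  have hmarg : pr μ {ω' | X ω' = X ω ∧ T ω' = T ω} = pr μ {ω' | X ω' = X ω} :=
    pr_congr μ fun ω' hω' => and_iff_left_of_imp (hXT ω' hω')
  have hci := hci u (X ω) (T ω)
  rw [hjoint, hmarg] at hci
  rw [posterior, posterior, ENNReal.div_eq_div_iff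
    (pr_ne_zero_of_mem μ (S := {ω' | T ω' = T ω}) hω rfl) (pr_ne_top μ _)
    (pr_ne_zero_of_mem μ (S := {ω' | X ω' = X ω}) hω rfl) (pr_ne_top μ _), mul_comm, hci, mul_comm]

lemma funDep_posteriorStat_of_suffStat {γ : Type} {T : Ω → γ} (hT : SuffStat μ X U T) :
    FunDep μ T (posteriorStat μ U X) :=
  ⟨fun t u => posterior μ U T t u.1,
    fun _ hω => funext fun u => posterior_eq_of_suffStat μ U X hT hω u.1⟩

lemma minSuffStat_posteriorStat : MinSuffStat μ X U (posteriorStat μ U X) :=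
  ⟨suffStat_posteriorStat μ U X, fun _ _ hT => funDep_posteriorStat_of_suffStat μ U X hT⟩

end Posterior

lemma MinSuffStat.infoEq {Ω α β γ δ : Type} {μ : PMF Ω} {X : Ω → α} {U : Ω → β} {T₁ : Ω → γ}
    {T₂ : Ω → δ} (h₁ : MinSuffStat μ X U T₁) (h₂ : MinSuffStat μ X U T₂) : InfoEq μ T₁ T₂ :=
  ⟨h₂.2 γ T₁ h₁.1, h₁.2 δ T₂ h₂.1⟩

theorem posterior_is_minimal_sufficient_general {Ω α β : Type} (μ : PMF Ω)
    (X : Ω → α) (U : Ω → β) :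
    MinSuffStat μ X U
      (fun ω => fun u : {u : β // pr μ {ω' | U ω' = u} ≠ 0} =>
        pr μ {ω' | U ω' = u.1 ∧ X ω' = X ω} / pr μ {ω' | X ω' = X ω}) ∧
    ∀ (γ δ : Type) (T1 : Ω → γ) (T2 : Ω → δ),
      MinSuffStat μ X U T1 → MinSuffStat μ X U T2 → InfoEq μ T1 T2 :=
  ⟨minSuffStat_posteriorStat μ U X, fun _ _ _ _ h₁ h₂ => h₁.infoEq h₂⟩

/-- The posterior distribution of `U` given `X`, as a function of `X`, is a minimal
sufficient statistic of `X` for `U`; consequently, any two minimal sufficient statistics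
of `X` for `U` are informationally equivalent. -/
theorem posterior_is_minimal_sufficient {Ω α β : Type} (μ : PMF Ω)
    (X : Ω → α) (U : Ω → β)
    (hX : FinSupp μ X) (hU : FinSupp μ U) :
    MinSuffStat μ X U
      (fun ω => fun u : {u : β // pr μ {ω' | U ω' = u} ≠ 0} =>
        pr μ {ω' | U ω' = u.1 ∧ X ω' = X ω} / pr μ {ω' | X ω' = X ω}) ∧
    ∀ (γ δ : Type) (T1 : Ω → γ) (T2 : Ω → δ),
      MinSuffStat μ X U T1 → MinSuffStat μ X U T2 → InfoEq μ T1 T2 :=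
  posterior_is_minimal_sufficient_general μ X U

end Paper
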